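/- Let G be an edge-weighted graph and M a graph on terminal set K ⊆ V(G) with each edge (t, t') of M having weight dist_G(t, t'). Let t, t' ∈ K and suppose P is a t–t' shortest path in G partitioned into intervals I₁, …, I_s with endpoint vertices v_ℓ^j, v_r^j, and suppose: (a) dist_M(f(v_ℓ^j), f(v_r^j)) ≤ D·‖I_j⁺‖ for each j and some D ≥ 1, (b) for each j < s either f(v_r^j) = f(v_ℓ^{j+1}) or (f(v_r^j), f(v_ℓ^{j+1})) ∈ E(M), (c) dist_G(v, f(v)) ≤ A·dist_G(v, K) for all v on P, (d) dist_G(v, K) ≤ B·‖I_j⁺‖ for every endpoint v of interval I_j, and (e) Σ_j ‖I_j⁺‖ ≤ 2·dist_G(t, t'). Then dist_M(t, t') ≤ (2D + 1 + 4AB)·dist_G(t, t'). -/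

import Mathlib

open scoped BigOperators ENNReal

/-- Length of a walk (given as a list of vertices) under edge-weight `w`. -/
noncomputable def walkLen {V : Type*} (w : V → V → ℝ) : List V → ℝ
  | [] => 0
  | [_] => 0
  | a :: b :: l => w a b + walkLen w (b :: l)

/-- `l` is a walk from `u` to `v` in the graph with edge relation `E`. -/
def IsWalk {V : Type*} (E : V → V → Prop) (u v : V) (l : List V) : Prop :=
  l.head? = some u ∧ l.getLast? = some v ∧ l.Chain' E

/-- Shortest-path distance in an edge-weighted graph. -/
noncomputable def gdist {V : Type*} (E : V → V → Prop) (w : V → V → ℝ) (u v : V) : ℝ :=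
  sInf {L | ∃ l, IsWalk E u v l ∧ walkLen w l = L}

/-- Shortest-path distance from a vertex to a set of vertices. -/
noncomputable def gdistK {V : Type*} (E : V → V → Prop) (w : V → V → ℝ) (K : Set V) (v : V) : ℝ :=
  sInf {L | ∃ t ∈ K, ∃ l, IsWalk E v t l ∧ walkLen w l = L}

/-- Shortest-path distance, valued in `ℝ≥0∞` (so `⊤` if there is no walk). -/
noncomputable def gdistE {V : Type*} (E : V → V → Prop) (w : V → V → ℝ) (u v : V) : ℝ≥0∞ :=
  ⨅ l : {l : List V // IsWalk E u v l}, ENNReal.ofReal (walkLen w l.1)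

section Aux
variable {V : Type*}

lemma walkLen_nonneg (w : V → V → ℝ) (hw : ∀ a b, 0 ≤ w a b) : ∀ l : List V, 0 ≤ walkLen w l
  | [] => le_refl _
  | [_] => le_refl _
  | _ :: b :: l => add_nonneg (hw _ _) (walkLen_nonneg w hw (b :: l))

lemma walkLen_append (w : V → V → ℝ) {b : V} :
    ∀ (l : List V), l.getLast? = some b → ∀ m, walkLen w (l ++ m) = walkLen w l + walkLen w (b :: m)
  | [], h, m => by simp at h
  | [a], h, m => by
      obtain rfl : a = b := by simpa using h
      cases m <;> simp [walkLen]
  | a :: a' :: l, h, m => by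
      have h' : (a' :: l).getLast? = some b := by
        rw [← List.getLast?_cons_cons (a := a)]; exact h
      have ih := walkLen_append w (a' :: l) h' m
      simp only [List.cons_append] at *
      rw [walkLen, walkLen, ih]
      ring

lemma walkLen_reverse (w : V → V → ℝ) (hsymw : ∀ a b, w a b = w b a) :
    ∀ l : List V, walkLen w l.reverse = walkLen w l
  | [] => rfl
  | [_] => rfl
  | a :: b :: l => by
      have h : (b :: l).reverse.getLast? = some b := by
        rw [List.getLast?_reverse]; rfl
      rw [show (a :: b :: l).reverse = (b :: l).reverse ++ [a] by simp,
          walkLen_append w _ h, walkLen_reverse w hsymw (b :: l)]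
      simp [walkLen, hsymw b a]
      ring

lemma IsWalk.reverse {E : V → V → Prop} (hsymE : ∀ a b, E a b → E b a) {a b : V} {l : List V}
    (h : IsWalk E a b l) : IsWalk E b a l.reverse := by
  obtain ⟨h1, h2, h3⟩ := h
  refine ⟨?_, ?_, ?_⟩
  · rw [List.head?_reverse]; exact h2
  · rw [List.getLast?_reverse]; exact h1
  · show List.IsChain E l.reverse; rw [List.isChain_reverse]; exact List.IsChain.imp (fun x y hxy => hsymE x y hxy) h3

lemma IsWalk.trans' {E : V → V → Prop} (w : V → V → ℝ) {a b c : V} {l1 l2 : List V}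
    (h1 : IsWalk E a b l1) (h2 : IsWalk E b c l2) :
    IsWalk E a c (l1 ++ l2.tail) ∧ walkLen w (l1 ++ l2.tail) = walkLen w l1 + walkLen w l2 := by
  obtain ⟨h1h, h1l, h1c⟩ := h1
  obtain ⟨h2h, h2l, h2c⟩ := h2
  cases l2 with
  | nil => simp at h2h
  | cons x tl =>
    obtain rfl : x = b := by simpa using h2h
    refine ⟨⟨?_, ?_, ?_⟩, ?_⟩
    · cases l1 with
      | nil => simp at h1h
      | cons y r => simpa using h1h
    · show (l1 ++ tl).getLast? = some c
      cases tl with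
      | nil =>
        obtain rfl : x = c := by simpa using h2l
        simpa using h1l
      | cons y tl' =>
        rw [List.getLast?_append]
        have h5 : (y :: tl').getLast? = some c := by
          rw [← List.getLast?_cons_cons (a := x)]; exact h2l
        rw [h5]; rfl
    · refine h1c.append (List.isChain_cons.mp h2c).2 ?_
      intro p hp q hq
      rw [h1l] at hp
      obtain rfl : x = p := by simpa using hp
      exact (List.isChain_cons.mp h2c).1 q hq
    · exact walkLen_append w l1 h1l tl

lemma gdist_le_walkLen {E : V → V → Prop} {w : V → V → ℝ} (hw : ∀ a b, 0 ≤ w a b)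
    {a b : V} {l : List V} (h : IsWalk E a b l) : gdist E w a b ≤ walkLen w l :=
  csInf_le ⟨0, by rintro x ⟨l', hl', rfl⟩; exact walkLen_nonneg w hw l'⟩ ⟨l, h, rfl⟩

lemma gdist_triangle (E : V → V → Prop) (w : V → V → ℝ) (hw : ∀ a b, 0 ≤ w a b)
    (hconn : ∀ a b : V, ∃ l, IsWalk E a b l) (a b c : V) :
    gdist E w a c ≤ gdist E w a b + gdist E w b c := by
  have hne : ∀ u v : V, {L | ∃ l, IsWalk E u v l ∧ walkLen w l = L}.Nonempty := by
    intro u v; obtain ⟨l, hl⟩ := hconn u v; exact ⟨_, l, hl, rfl⟩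
  rw [show gdist E w a b + gdist E w b c = gdist E w b c + gdist E w a b by ring,
      ← sub_le_iff_le_add]
  refine le_csInf (hne b c) ?_
  rintro y ⟨l2, hl2, rfl⟩
  rw [sub_le_comm]
  refine le_csInf (hne a b) ?_
  rintro x ⟨l1, hl1, rfl⟩
  rw [sub_le_iff_le_add]
  obtain ⟨hwalk, hlen⟩ := IsWalk.trans' w hl1 hl2
  calc gdist E w a c ≤ walkLen w (l1 ++ l2.tail) := gdist_le_walkLen hw hwalk
  _ = walkLen w l1 + walkLen w l2 := hlen

lemma gdist_symm (E : V → V → Prop) (w : V → V → ℝ) (hsymE : ∀ a b, E a b → E b a)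
    (hsymw : ∀ a b, w a b = w b a) (a b : V) : gdist E w a b = gdist E w b a := by
  unfold gdist
  congr 1
  ext L
  constructor <;> rintro ⟨l, hl, rfl⟩ <;>
    exact ⟨l.reverse, hl.reverse hsymE, walkLen_reverse w hsymw l⟩

lemma gdistE_le_walk {E : V → V → Prop} {w : V → V → ℝ} {a b : V} {l : List V}
    (h : IsWalk E a b l) : gdistE E w a b ≤ ENNReal.ofReal (walkLen w l) :=
  iInf_le _ (⟨l, h⟩ : {l : List V // IsWalk E a b l})

lemma gdistE_triangle (E : V → V → Prop) (w : V → V → ℝ) (a b c : V) :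
    gdistE E w a c ≤ gdistE E w a b + gdistE E w b c := by
  have key : ∀ (l1 : {l : List V // IsWalk E a b l}) (l2 : {l : List V // IsWalk E b c l}),
      gdistE E w a c ≤ ENNReal.ofReal (walkLen w l1.1) + ENNReal.ofReal (walkLen w l2.1) := by
    rintro ⟨l1, h1⟩ ⟨l2, h2⟩
    obtain ⟨hwalk, hlen⟩ := IsWalk.trans' w h1 h2
    calc gdistE E w a c ≤ ENNReal.ofReal (walkLen w (l1 ++ l2.tail)) := gdistE_le_walk hwalk
    _ = ENNReal.ofReal (walkLen w l1 + walkLen w l2) := by rw [hlen]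
    _ ≤ _ := ENNReal.ofReal_add_le
  conv_rhs => rw [show gdistE E w a b = ⨅ l : {l : List V // IsWalk E a b l},
    ENNReal.ofReal (walkLen w l.1) from rfl, ENNReal.iInf_add]
  refine le_iInf fun l1 => ?_
  rw [show gdistE E w b c = ⨅ l : {l : List V // IsWalk E b c l},
    ENNReal.ofReal (walkLen w l.1) from rfl, ENNReal.add_iInf]
  exact le_iInf fun l2 => key l1 l2

end Aux

/-- the final assembly step of Lemma 2: summing the per-interval bounds (a)–(e)
along a shortest terminal-to-terminal path yields `dist_M(t,t') ≤ (2D + 1 + 4AB)·dist_G(t,t')`.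
Here `M` has edge relation `EM` on the terminals and edge weights `dist_G`. -/
theorem stmt_18 {V : Type*} (E : V → V → Prop) (w : V → V → ℝ)
    (hsymE : ∀ a b, E a b → E b a) (hsymw : ∀ a b, w a b = w b a)
    (hw : ∀ a b, 0 ≤ w a b)
    (hconn : ∀ a b : V, ∃ l, IsWalk E a b l)
    (K : Set V) (f : V → V) (hfK : ∀ x, f x ∈ K)
    (EM : V → V → Prop)
    (t t' : V) (ht : t ∈ K) (ht' : t' ∈ K) (hft : f t = t) (hft' : f t' = t')
    (s : ℕ) (hs : 1 ≤ s) (vl vr : ℕ → V)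
    (hfirst : vl 1 = t) (hlastv : vr s = t')
    (Iplen : ℕ → ℝ)
    (D A B : ℝ) (hD : 1 ≤ D) (hA : 1 ≤ A) (hB : 1 ≤ B)
    -- (a)
    (ha : ∀ j, 1 ≤ j → j ≤ s →
      gdistE EM (fun x y => gdist E w x y) (f (vl j)) (f (vr j)) ≤
        ENNReal.ofReal (D * Iplen j))
    -- (b)
    (hb : ∀ j, 1 ≤ j → j < s →
      f (vr j) = f (vl (j + 1)) ∨ EM (f (vr j)) (f (vl (j + 1))))
    -- (c)
    (hc : ∀ x : V, gdist E w x (f x) ≤ A * gdistK E w K x)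
    -- (d)
    (hd : ∀ j, 1 ≤ j → j ≤ s →
      gdistK E w K (vl j) ≤ B * Iplen j ∧ gdistK E w K (vr j) ≤ B * Iplen j)
    -- (e)
    (he : ∑ j ∈ Finset.Icc 1 s, Iplen j ≤ 2 * gdist E w t t')
    -- the gaps between consecutive intervals lie along the shortest path `P`
    (hgap : ∑ j ∈ Finset.Ico 1 s, gdist E w (vr j) (vl (j + 1)) ≤ gdist E w t t') :
    gdistE EM (fun x y => gdist E w x y) t t' ≤
      ENNReal.ofReal ((2 * D + 1 + 4 * A * B) * gdist E w t t') := by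
  classical
  set dM : V → V → ℝ := fun x y => gdist E w x y with hdM
  have gd_nonneg : ∀ u v : V, 0 ≤ gdist E w u v := by
    intro u v
    obtain ⟨l, hl⟩ := hconn u v
    refine le_csInf ⟨_, l, hl, rfl⟩ ?_
    rintro x ⟨l', hl', rfl⟩
    exact walkLen_nonneg w hw l'
  have gdK_nonneg : ∀ v : V, 0 ≤ gdistK E w K v := by
    intro v
    obtain ⟨l, hl⟩ := hconn v t
    refine le_csInf ⟨_, t, ht, l, hl, rfl⟩ ?_
    rintro x ⟨u, hu, l', hl', rfl⟩
    exact walkLen_nonneg w hw l'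
  have hIp : ∀ j, 1 ≤ j → j ≤ s → 0 ≤ Iplen j := by
    intro j h1 h2
    have h3 := (hd j h1 h2).1
    nlinarith [gdK_nonneg (vl j)]
  have hA0 : (0:ℝ) ≤ A := by linarith
  have hAB : (0:ℝ) ≤ A * B := by nlinarith
  -- real-valued bound on a gap
  have hgapbd : ∀ j, 1 ≤ j → j < s →
      gdist E w (f (vr j)) (f (vl (j+1))) ≤
        A * B * Iplen j + gdist E w (vr j) (vl (j+1)) + A * B * Iplen (j+1) := by
    intro j h1 h2
    have t1 : gdist E w (f (vr j)) (vr j) ≤ A * B * Iplen j := by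
      rw [gdist_symm E w hsymE hsymw]
      calc gdist E w (vr j) (f (vr j)) ≤ A * gdistK E w K (vr j) := hc _
      _ ≤ A * (B * Iplen j) := mul_le_mul_of_nonneg_left (hd j h1 h2.le).2 hA0
      _ = A * B * Iplen j := by ring
    have t2 : gdist E w (vl (j+1)) (f (vl (j+1))) ≤ A * B * Iplen (j+1) := by
      calc gdist E w (vl (j+1)) (f (vl (j+1))) ≤ A * gdistK E w K (vl (j+1)) := hc _
      _ ≤ A * (B * Iplen (j+1)) :=
        mul_le_mul_of_nonneg_left (hd (j+1) (by omega) (by omega)).1 hA0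
      _ = A * B * Iplen (j+1) := by ring
    have tri1 : gdist E w (f (vr j)) (f (vl (j+1))) ≤
        gdist E w (f (vr j)) (vl (j+1)) + gdist E w (vl (j+1)) (f (vl (j+1))) :=
      gdist_triangle E w hw hconn _ _ _
    have tri2 : gdist E w (f (vr j)) (vl (j+1)) ≤
        gdist E w (f (vr j)) (vr j) + gdist E w (vr j) (vl (j+1)) :=
      gdist_triangle E w hw hconn _ _ _
    linarith
  -- the ENNReal terms
    -- aterm j := ENNReal.ofReal (D * Iplen j)
  set gterm : ℕ → ℝ≥0∞ := fun j => ENNReal.ofReal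
      (A * B * Iplen j + gdist E w (vr j) (vl (j+1)) + A * B * Iplen (j+1)) with hgterm
  have hmid : ∀ j, 1 ≤ j → j < s →
      gdistE EM dM (f (vr j)) (f (vl (j+1))) ≤ gterm j := by
    intro j h1 h2
    rcases hb j h1 h2 with heq | hedge
    · rw [heq]
      have h0 : gdistE EM dM (f (vl (j+1))) (f (vl (j+1))) ≤
          ENNReal.ofReal (walkLen dM [f (vl (j+1))]) :=
        gdistE_le_walk ⟨rfl, by simp, List.isChain_singleton _⟩
      calc gdistE EM dM (f (vl (j+1))) (f (vl (j+1))) ≤ ENNReal.ofReal (walkLen dM [f (vl (j+1))]) := h0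
      _ = 0 := by simp [walkLen]
      _ ≤ gterm j := zero_le
    · have h0 : gdistE EM dM (f (vr j)) (f (vl (j+1))) ≤
          ENNReal.ofReal (walkLen dM [f (vr j), f (vl (j+1))]) :=
        gdistE_le_walk ⟨rfl, by simp, List.isChain_pair.mpr hedge⟩
      calc gdistE EM dM (f (vr j)) (f (vl (j+1)))
          ≤ ENNReal.ofReal (walkLen dM [f (vr j), f (vl (j+1))]) := h0
      _ = ENNReal.ofReal (dM (f (vr j)) (f (vl (j+1)))) := by simp [walkLen]
      _ ≤ gterm j := ENNReal.ofReal_le_ofReal (hgapbd j h1 h2)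
  -- main induction
  have main : ∀ n, 1 ≤ n → n ≤ s →
      gdistE EM dM t (f (vr n)) ≤
        (∑ j ∈ Finset.Icc 1 n, ENNReal.ofReal (D * Iplen j)) +
          ∑ j ∈ Finset.Ico 1 n, gterm j := by
    intro n h1
    induction n, h1 using Nat.le_induction with
    | base =>
      intro hs1
      have hft1 : f (vl 1) = t := by rw [hfirst, hft]
      rw [← hft1]
      simpa using ha 1 le_rfl hs1
    | succ n hn ih =>
      intro hns
      have h1 := ih (by omega)
      have h2 := hmid n hn (by omega)
      have h3 := ha (n+1) (by omega) hns
      have hftn : f (vl (n+1)) = f (vl (n+1)) := rfl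
      calc gdistE EM dM t (f (vr (n+1)))
          ≤ gdistE EM dM t (f (vr n)) + gdistE EM dM (f (vr n)) (f (vr (n+1))) :=
            gdistE_triangle _ _ _ _ _
      _ ≤ gdistE EM dM t (f (vr n)) +
            (gdistE EM dM (f (vr n)) (f (vl (n+1))) +
              gdistE EM dM (f (vl (n+1))) (f (vr (n+1)))) :=
            add_le_add_right (gdistE_triangle _ _ _ _ _) _
      _ ≤ ((∑ j ∈ Finset.Icc 1 n, ENNReal.ofReal (D * Iplen j)) +
            ∑ j ∈ Finset.Ico 1 n, gterm j) +
            (gterm n + ENNReal.ofReal (D * Iplen (n+1))) :=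
            add_le_add h1 (add_le_add h2 h3)
      _ = (∑ j ∈ Finset.Icc 1 (n+1), ENNReal.ofReal (D * Iplen j)) +
            ∑ j ∈ Finset.Ico 1 (n+1), gterm j := by
            rw [Finset.sum_Icc_succ_top (by omega : 1 ≤ n + 1), Finset.sum_Ico_succ_top hn]
            ring
  have hfin : f (vr s) = t' := by rw [hlastv, hft']
  have hmain := main s hs le_rfl
  rw [hfin] at hmain
  refine hmain.trans ?_
  -- convert to a single ofReal
  have e1 : (∑ j ∈ Finset.Icc 1 s, ENNReal.ofReal (D * Iplen j)) =
      ENNReal.ofReal (∑ j ∈ Finset.Icc 1 s, D * Iplen j) := by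
    rw [ENNReal.ofReal_sum_of_nonneg]
    intro i hi
    rw [Finset.mem_Icc] at hi
    exact mul_nonneg (by linarith) (hIp i hi.1 hi.2)
  have e2 : (∑ j ∈ Finset.Ico 1 s, gterm j) =
      ENNReal.ofReal (∑ j ∈ Finset.Ico 1 s,
        (A * B * Iplen j + gdist E w (vr j) (vl (j+1)) + A * B * Iplen (j+1))) := by
    rw [ENNReal.ofReal_sum_of_nonneg]
    intro i hi
    rw [Finset.mem_Ico] at hi
    have := hIp i hi.1 (by omega)
    have := hIp (i+1) (by omega) (by omega)
    have := gd_nonneg (vr i) (vl (i+1))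
    positivity
  have hnn1 : 0 ≤ ∑ j ∈ Finset.Icc 1 s, D * Iplen j := by
    apply Finset.sum_nonneg
    intro i hi
    rw [Finset.mem_Icc] at hi
    exact mul_nonneg (by linarith) (hIp i hi.1 hi.2)
  rw [e1, e2, ← ENNReal.ofReal_add hnn1 ?hnn]
  case hnn =>
    apply Finset.sum_nonneg
    intro i hi
    rw [Finset.mem_Ico] at hi
    have := hIp i hi.1 (by omega)
    have := hIp (i+1) (by omega) (by omega)
    have := gd_nonneg (vr i) (vl (i+1))
    positivity
  apply ENNReal.ofReal_le_ofReal
  -- real arithmetic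
  set d := gdist E w t t' with hdd
  have hSa : ∑ j ∈ Finset.Icc 1 s, D * Iplen j ≤ D * (2 * d) := by
    rw [← Finset.mul_sum]
    exact mul_le_mul_of_nonneg_left he (by linarith)
  have hsplit : ∑ j ∈ Finset.Ico 1 s,
      (A * B * Iplen j + gdist E w (vr j) (vl (j+1)) + A * B * Iplen (j+1)) =
      A * B * (∑ j ∈ Finset.Ico 1 s, Iplen j) +
        (∑ j ∈ Finset.Ico 1 s, gdist E w (vr j) (vl (j+1))) +
        A * B * (∑ j ∈ Finset.Ico 1 s, Iplen (j+1)) := by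
    rw [Finset.sum_add_distrib, Finset.sum_add_distrib, Finset.mul_sum, Finset.mul_sum]
  have hsub1 : ∑ j ∈ Finset.Ico 1 s, Iplen j ≤ 2 * d := by
    refine le_trans (Finset.sum_le_sum_of_subset_of_nonneg ?_ ?_) he
    · intro i hi
      rw [Finset.mem_Ico] at hi
      rw [Finset.mem_Icc]
      omega
    · intro i hi _
      rw [Finset.mem_Icc] at hi
      exact hIp i hi.1 hi.2
  have hsub2 : ∑ j ∈ Finset.Ico 1 s, Iplen (j+1) ≤ 2 * d := by
    rw [Finset.sum_Ico_add' Iplen 1 s 1]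
    refine le_trans (Finset.sum_le_sum_of_subset_of_nonneg ?_ ?_) he
    · intro i hi
      rw [Finset.mem_Ico] at hi
      rw [Finset.mem_Icc]
      omega
    · intro i hi _
      rw [Finset.mem_Icc] at hi
      exact hIp i hi.1 hi.2
  have m1 : A * B * (∑ j ∈ Finset.Ico 1 s, Iplen j) ≤ A * B * (2 * d) :=
    mul_le_mul_of_nonneg_left hsub1 hAB
  have m2 : A * B * (∑ j ∈ Finset.Ico 1 s, Iplen (j+1)) ≤ A * B * (2 * d) :=
    mul_le_mul_of_nonneg_left hsub2 hAB
  have hexp : (2 * D + 1 + 4 * A * B) * d =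
      D * (2 * d) + d + (A * B * (2 * d) + A * B * (2 * d)) := by ring
  rw [hsplit, hexp]
  have hgap' : ∑ j ∈ Finset.Ico 1 s, gdist E w (vr j) (vl (j+1)) ≤ d := hgap
  linarith
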